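/- arXiv:1510.03721 — 2 statements merged into one kernel-verified Lean document; each statement's English description precedes it below -/
import Mathlib

section
/- Let q be a prime power and n, s integers with 1 ≤ s ≤ n−1 and n−s ≤ q. Then |Σ_{r=1}^{n−s} (−1)^{r−1} (C(q,r) q^{1−r} − q/r!) − 1/(2e)| ≤ 1/(2(n−s−1)!) + 7/q, where C(q,r) is the binomial coefficient and e is Euler's number. -/
/-!
Write the `r`-th summand as `q / r! * (∏_{j<r} (1 - j/q) - 1)`. Bracketing the product between
`1 - u` and `1 - u + u²/2`, where `u = r(r-1)/(2q)`, shows that for `r = k + 2` the summand is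
`(-1)^k / (2 k!)` up to an error `(k+2)(k+1) / (8 q k!)`. The main terms form a partial sum of
the alternating series `e⁻¹ / 2 = ∑ (-1)^k / (2 k!)`, whose tail is bounded by its first omitted
term, and the errors sum to at most `7 / q` because `(k+2)(k+1) / k! ≤ 28 / 2^k`.
-/

open Finset Real Nat

theorem hasSum_neg_one_pow_mul_one_div_factorial :
    HasSum (fun n : ℕ => (-1 : ℝ) ^ n * (1 / (n ! : ℝ))) (exp (-1)) := by
  rw [Real.exp_eq_exp_ℝ]
  simpa [div_eq_mul_inv] using NormedSpace.expSeries_div_hasSum_exp (𝔸 := ℝ) (-1)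

theorem abs_sum_range_neg_one_pow_div_factorial_sub_exp_neg_one_le (N : ℕ) :
    |(∑ k ∈ range N, (-1 : ℝ) ^ k / k !) - exp (-1)| ≤ 1 / N ! := by
  have hanti : Antitone fun n : ℕ => 1 / (n ! : ℝ) := fun m n hmn =>
    one_div_le_one_div_of_le (by positivity) (mod_cast Nat.factorial_le hmn)
  have h := alternating_series_error_bound (fun n : ℕ => 1 / (n ! : ℝ)) hanti
    (by simpa using Real.summable_pow_div_factorial 1) N
  rw [hasSum_neg_one_pow_mul_one_div_factorial.tsum_eq, abs_sub_comm] at h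
  simpa [div_eq_mul_inv] using h

theorem Finset.one_sub_sum_le_prod_one_sub {ι : Type*} (s : Finset ι) {x : ι → ℝ}
    (hx0 : ∀ i ∈ s, 0 ≤ x i) (hx1 : ∀ i ∈ s, x i ≤ 1) :
    1 - ∑ i ∈ s, x i ≤ ∏ i ∈ s, (1 - x i) := by
  classical
  induction s using Finset.induction_on with
  | empty => simp
  | insert a s ha ih =>
    simp only [mem_insert, forall_eq_or_imp] at hx0 hx1
    rw [prod_insert ha, sum_insert ha]
    have hS : 0 ≤ ∑ i ∈ s, x i := sum_nonneg hx0.2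
    nlinarith [mul_le_mul_of_nonneg_left (ih hx0.2 hx1.2) (sub_nonneg.2 hx1.1),
      mul_nonneg hx0.1 hS]

theorem Finset.prod_one_sub_le_one_sub_sum_add_sq {ι : Type*} (s : Finset ι) {x : ι → ℝ}
    (hx0 : ∀ i ∈ s, 0 ≤ x i) (hx1 : ∀ i ∈ s, x i ≤ 1) :
    ∏ i ∈ s, (1 - x i) ≤ 1 - ∑ i ∈ s, x i + (∑ i ∈ s, x i) ^ 2 / 2 := by
  classical
  induction s using Finset.induction_on with
  | empty => simp
  | insert a s ha ih =>
    simp only [mem_insert, forall_eq_or_imp] at hx0 hx1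
    rw [prod_insert ha, sum_insert ha]
    have hS : 0 ≤ ∑ i ∈ s, x i := sum_nonneg hx0.2
    nlinarith [mul_le_mul_of_nonneg_left (ih hx0.2 hx1.2) (sub_nonneg.2 hx1.1),
      mul_nonneg hx0.1 (mul_nonneg hS hS), mul_nonneg hx0.1 hx0.1]

theorem Finset.sum_range_natCast_id (n : ℕ) : ∑ j ∈ range n, (j : ℝ) = n * (n - 1) / 2 := by
  induction n with
  | zero => simp
  | succ n ih => rw [sum_range_succ, ih]; push_cast; ring

theorem Nat.cast_choose_mul_zpow_one_sub {q r : ℕ} (hq : q ≠ 0) (hr : r ≤ q) :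
    (q.choose r : ℝ) * (q : ℝ) ^ ((1 : ℤ) - r) = q / r ! * ∏ j ∈ range r, (1 - (j : ℝ) / q) := by
  have hq' : (q : ℝ) ≠ 0 := mod_cast hq
  have hdesc : (q.choose r : ℝ) * r ! = ∏ j ∈ range r, ((q : ℝ) - j) := by
    rw [← Nat.cast_mul, mul_comm, ← Nat.descFactorial_eq_factorial_mul_choose,
      Nat.descFactorial_eq_prod_range, Nat.cast_prod]
    exact prod_congr rfl fun j hj => Nat.cast_sub (by simp at hj; omega)
  have hprod : ∏ j ∈ range r, (1 - (j : ℝ) / q) = (∏ j ∈ range r, ((q : ℝ) - j)) / q ^ r := by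
    rw [show (q : ℝ) ^ r = ∏ _j ∈ range r, (q : ℝ) by simp, ← prod_div_distrib]
    exact prod_congr rfl fun j _ => by field_simp
  rw [hprod, ← hdesc, zpow_sub₀ hq', zpow_one, zpow_natCast]
  field_simp

noncomputable def binomialTerm (q r : ℕ) : ℝ :=
  (q.choose r : ℝ) * (q : ℝ) ^ ((1 : ℤ) - (r : ℤ)) - q / r !

theorem abs_binomialTerm_add_one_div_two_mul_factorial_le {q : ℕ} (k : ℕ) (hk : k + 2 ≤ q) :
    |binomialTerm q (k + 2) + 1 / (2 * k !)| ≤ (k + 2) * (k + 1) / (8 * q * k !) := by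
  have hq : (0 : ℝ) < q := by norm_cast; omega
  set u : ℝ := ∑ j ∈ range (k + 2), (j : ℝ) / q
  set P : ℝ := ∏ j ∈ range (k + 2), (1 - (j : ℝ) / q)
  have hx0 : ∀ j ∈ range (k + 2), 0 ≤ (j : ℝ) / q := fun j _ => by positivity
  have hx1 : ∀ j ∈ range (k + 2), (j : ℝ) / q ≤ 1 := fun j hj => by
    rw [div_le_one hq]; exact_mod_cast (mem_range.1 hj).le.trans hk
  have hlow : 1 - u ≤ P := one_sub_sum_le_prod_one_sub _ hx0 hx1
  have hupp : P ≤ 1 - u + u ^ 2 / 2 := prod_one_sub_le_one_sub_sum_add_sq _ hx0 hx1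
  have hu : u = (k + 2) * (k + 1) / (2 * q) := by
    simp only [u, ← sum_div, sum_range_natCast_id]; push_cast; ring
  set a : ℝ := q / (k + 2)!
  have ha : 0 ≤ a := by positivity
  have hau : a * u = 1 / (2 * k !) := by
    simp only [a, hu, Nat.factorial_succ]; push_cast; field_simp; ring
  have hterm : binomialTerm q (k + 2) + 1 / (2 * k !) = a * (P - (1 - u)) := by
    rw [binomialTerm, Nat.cast_choose_mul_zpow_one_sub (by omega) hk, ← hau]; ring
  have hbound : a * (u ^ 2 / 2) = (k + 2) * (k + 1) / (8 * q * k !) := by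
    rw [show a * (u ^ 2 / 2) = a * u * (u / 2) by ring, hau, hu]; field_simp; ring
  rw [hterm, abs_of_nonneg (mul_nonneg ha (by linarith)), ← hbound]
  exact mul_le_mul_of_nonneg_left (by linarith) ha

theorem Nat.add_two_mul_add_one_mul_two_pow_le (k : ℕ) :
    (k + 2) * (k + 1) * 2 ^ k ≤ 28 * k ! := by
  induction k with
  | zero => simp
  | succ k ih =>
    rcases Nat.lt_or_ge k 3 with hk | hk
    · interval_cases k <;> decide
    · rw [Nat.factorial_succ, pow_succ]
      nlinarith [Nat.mul_le_mul_left (k + 1) ih, Nat.zero_le ((k + 2) * 2 ^ k)]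

theorem sum_range_add_two_mul_add_one_div_factorial_le (K : ℕ) :
    ∑ k ∈ range K, ((k : ℝ) + 2) * (k + 1) / k ! ≤ 56 := by
  have hterm (k : ℕ) : ((k : ℝ) + 2) * (k + 1) / k ! ≤ 28 * (1 / 2) ^ k := by
    rw [one_div_pow, mul_one_div, div_le_div_iff₀ (by positivity) (by positivity)]
    exact_mod_cast Nat.add_two_mul_add_one_mul_two_pow_le k
  calc ∑ k ∈ range K, ((k : ℝ) + 2) * (k + 1) / k !
      ≤ ∑ k ∈ range K, 28 * (1 / 2 : ℝ) ^ k := sum_le_sum fun k _ => hterm k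
    _ = 28 * ∑ k ∈ range K, (1 / 2 : ℝ) ^ k := by rw [mul_sum]
    _ ≤ 28 * 2 := by gcongr; exact sum_geometric_two_le K
    _ = 56 := by norm_num

theorem sum_range_abs_binomialTerm_add_one_div_two_mul_factorial_le {q m : ℕ} (hm : m ≤ q) :
    ∑ k ∈ range (m - 1), |binomialTerm q (k + 2) + 1 / (2 * k !)| ≤ 7 / q :=
  calc ∑ k ∈ range (m - 1), |binomialTerm q (k + 2) + 1 / (2 * k !)|
      ≤ ∑ k ∈ range (m - 1), ((k : ℝ) + 2) * (k + 1) / (8 * q * k !) :=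
        sum_le_sum fun k hk =>
          abs_binomialTerm_add_one_div_two_mul_factorial_le k (by simp at hk; omega)
    _ = (∑ k ∈ range (m - 1), ((k : ℝ) + 2) * (k + 1) / k !) / (8 * q) := by
        rw [sum_div]; congr! 1 with k; ring
    _ ≤ 56 / (8 * q) := by gcongr; exact sum_range_add_two_mul_add_one_div_factorial_le _
    _ = 7 / q := by ring

theorem Finset.sum_Icc_one_eq_sum_range_add_two {M : Type*} [AddCommMonoid M] {f : ℕ → M}
    (hf : f 1 = 0) (m : ℕ) : ∑ r ∈ Icc 1 m, f r = ∑ k ∈ range (m - 1), f (k + 2) := by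
  induction m with
  | zero => simp
  | succ m ih =>
    rw [sum_Icc_succ_top (by omega), ih]
    rcases m with _ | m
    · simp [hf]
    · simp [sum_range_succ]

theorem sum_binomial_tail_estimate_general (q n s : ℕ) (hqn : n - s ≤ q) :
    |(∑ r ∈ Finset.Icc 1 (n - s), (-1 : ℝ) ^ (r - 1) *
        ((q.choose r : ℝ) * (q : ℝ) ^ ((1 : ℤ) - (r : ℤ)) -
          (q : ℝ) / (Nat.factorial r : ℝ))) -
      1 / (2 * Real.exp 1)| ≤
        1 / (2 * (Nat.factorial (n - s - 1) : ℝ)) + 7 / (q : ℝ) := by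
  change |∑ r ∈ Icc 1 (n - s), (-1 : ℝ) ^ (r - 1) * binomialTerm q r - 1 / (2 * exp 1)| ≤ _
  rw [sum_Icc_one_eq_sum_range_add_two (by simp [binomialTerm])]
  set K := n - s - 1
  set E := ∑ k ∈ range K, (-1 : ℝ) ^ k * (binomialTerm q (k + 2) + 1 / (2 * k !))
  have hsplit : ∑ k ∈ range K, (-1 : ℝ) ^ (k + 2 - 1) * binomialTerm q (k + 2) - 1 / (2 * exp 1) =
      -E + ((∑ k ∈ range K, (-1 : ℝ) ^ k / k !) - exp (-1)) / 2 := by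
    have hterm (k : ℕ) : (-1 : ℝ) ^ (k + 2 - 1) * binomialTerm q (k + 2) =
        -((-1) ^ k * (binomialTerm q (k + 2) + 1 / (2 * k !))) + (-1) ^ k / k ! / 2 := by
      rw [show k + 2 - 1 = k + 1 by omega, pow_succ]; ring
    simp only [E, hterm, sum_add_distrib, sum_neg_distrib, ← sum_div, exp_neg]
    ring
  have herr : |E| ≤ 7 / q := (abs_sum_le_sum_abs _ _).trans <| by
    simpa only [abs_mul, abs_pow, abs_neg, abs_one, one_pow, one_mul] using
      sum_range_abs_binomialTerm_add_one_div_two_mul_factorial_le hqn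
  have hexp := abs_sum_range_neg_one_pow_div_factorial_sub_exp_neg_one_le K
  have htri := abs_add_le (-E) (((∑ k ∈ range K, (-1 : ℝ) ^ k / k !) - exp (-1)) / 2)
  rw [abs_neg, abs_div, abs_two] at htri
  rw [hsplit, show 1 / (2 * (K ! : ℝ)) = 1 / K ! / 2 by ring]
  linarith

/-- an explicit bound for the tail of the inclusion–exclusion sum. -/
theorem sum_binomial_tail_estimate (q n s : ℕ)
    (hq : ∃ p k : ℕ, p.Prime ∧ 1 ≤ k ∧ q = p ^ k)
    (hs1 : 1 ≤ s) (hs2 : s ≤ n - 1) (hqn : n - s ≤ q) :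
    |(∑ r ∈ Finset.Icc 1 (n - s), (-1 : ℝ) ^ (r - 1) *
        ((q.choose r : ℝ) * (q : ℝ) ^ ((1 : ℤ) - (r : ℤ)) -
          (q : ℝ) / (Nat.factorial r : ℝ))) -
      1 / (2 * Real.exp 1)| ≤
        1 / (2 * (Nat.factorial (n - s - 1) : ℝ)) + 7 / (q : ℝ) :=
  sum_binomial_tail_estimate_general q n s hqn
end

section
/- Let 1 ≤ s ≤ r and let x ∈ K^r be a point at which every s×s minor of the s×r matrix (∂Π_i/∂X_j(x))_{1≤i≤s, 1≤j≤r} vanishes. Then x has at most s−1 pairwise-distinct coordinates; equivalently, if x has at least s pairwise-distinct coordinates then the matrix has full rank s. -/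
/-!
Differentiating `e_{k+1}` in `X_j` gives `e_k` of the coordinates other than `x_j`, and splitting
off the factor `1 + x_j t` of `∏ᵢ (1 + x_i t)` gives
`e_k(x without x_j) = ∑_{m ≤ k} (-x_j)^m e_{k-m}(x)`.
So the Jacobian is a unitriangular Toeplitz matrix of the `e_k(x)` times the transposed
Vandermonde matrix of `-x`, and each `s × s` minor is the Vandermonde determinant of `-x` on the
chosen columns: it vanishes exactly when two of those coordinates coincide.
-/

open MvPolynomial Finset

namespace Multiset

variable {R : Type*}

@[simp]
theorem esymm_zero [CommSemiring R] (s : Multiset R) : s.esymm 0 = 1 := by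
  simp [esymm]

theorem esymm_cons_succ [CommSemiring R] (a : R) (s : Multiset R) (n : ℕ) :
    (a ::ₘ s).esymm (n + 1) = s.esymm (n + 1) + a * s.esymm n := by
  simp [esymm, sum_map_mul_left]

theorem map_esymm {S : Type*} [CommSemiring R] [CommSemiring S] (f : R →+* S)
    (s : Multiset R) (n : ℕ) : f (s.esymm n) = (s.map f).esymm n := by
  simp [esymm, powersetCard_map, map_multiset_sum, map_multiset_prod, map_map]

theorem sum_range_neg_pow_mul_esymm_cons [CommRing R] (a : R) (s : Multiset R) (k : ℕ) :
    ∑ m ∈ Finset.range (k + 1), (-a) ^ m * (a ::ₘ s).esymm (k - m) = s.esymm k := by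
  induction k with
  | zero => simp
  | succ k ih =>
    rw [Finset.sum_range_succ']
    simp_rw [Nat.add_sub_add_right, pow_succ', mul_assoc, ← Finset.mul_sum, ih, pow_zero,
      one_mul, Nat.sub_zero, esymm_cons_succ]
    ring

end Multiset

theorem Finset.map_val_eq_cons_map_erase {σ α : Type*} [DecidableEq σ] {s : Finset σ} {j : σ}
    (hj : j ∈ s) (f : σ → α) : s.val.map f = f j ::ₘ (s.erase j).val.map f := by
  rw [← Multiset.map_cons, erase_val, Multiset.cons_erase hj]

theorem Derivation.map_esymm_eq_zero {R A M : Type*} [CommSemiring R] [CommSemiring A]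
    [Algebra R A] [AddCommMonoid M] [Module A M] [Module R M] (D : Derivation R A M)
    {s : Multiset A} (hs : ∀ a ∈ s, D a = 0) (n : ℕ) : D (s.esymm n) = 0 := by
  rw [Multiset.esymm, map_multiset_sum, Multiset.map_map]
  refine Multiset.sum_eq_zero fun _ hmem => ?_
  obtain ⟨t, ht, rfl⟩ := Multiset.mem_map.mp hmem
  refine Multiset.prod_induction (D · = 0) t (fun a b ha hb => ?_) D.map_one_eq_zero
    fun a ha => hs a (Multiset.mem_of_le (Multiset.mem_powersetCard.mp ht).1 ha)
  simp [D.leibniz, ha, hb]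

theorem Function.exists_injective_comp_of_le_card_image {α β : Type*} [Fintype α]
    [DecidableEq β] (f : α → β) {s : ℕ} (h : s ≤ #(univ.image f)) :
    ∃ c : Fin s → α, Injective (f ∘ c) := by
  obtain ⟨e⟩ := Function.Embedding.nonempty_of_card_le (α := Fin s) (β := univ.image f)
    (by simpa)
  choose g hg using fun y : univ.image f => mem_image.mp y.2
  refine ⟨g ∘ e, fun a b hab => e.injective (Subtype.ext ?_)⟩
  simpa [hg] using hab

namespace MvPolynomial

variable {σ R : Type*} [CommRing R] [Fintype σ] [DecidableEq σ]

theorem pderiv_esymm_succ (j : σ) (k : ℕ) :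
    pderiv j (esymm σ R (k + 1)) = ((univ.erase j).val.map X).esymm k := by
  rw [esymm_eq_multiset_esymm, univ.map_val_eq_cons_map_erase (mem_univ j),
    Multiset.esymm_cons_succ, map_add, Derivation.leibniz, pderiv_X_self]
  have hconst (n : ℕ) :
      pderiv j (((univ.erase j).val.map (X : σ → MvPolynomial σ R)).esymm n) = 0 :=
    (pderiv j).map_esymm_eq_zero (fun p hp => by
      obtain ⟨a, ha, rfl⟩ := Multiset.mem_map.mp hp
      exact pderiv_X_of_ne (Finset.ne_of_mem_erase ha)) n
  simp only [hconst, mul_zero, smul_eq_mul, mul_one, zero_add]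

theorem eval_pderiv_esymm_succ (x : σ → R) (j : σ) (k : ℕ) :
    eval x (pderiv j (esymm σ R (k + 1))) = ((univ.erase j).val.map x).esymm k := by
  rw [pderiv_esymm_succ, Multiset.map_esymm, Multiset.map_map]
  simp [Function.comp_def]

end MvPolynomial

namespace Matrix

variable {σ R : Type*} [CommRing R] [Fintype σ]

noncomputable def esymmJacobian (s : ℕ) (x : σ → R) : Matrix (Fin s) σ R :=
  of fun i j => eval x (pderiv j (esymm σ R ((i : ℕ) + 1)))

def esymmToeplitz (s : ℕ) (x : σ → R) : Matrix (Fin s) (Fin s) R :=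
  of fun i m => if m ≤ i then (univ.val.map x).esymm (i - m) else 0

theorem det_esymmToeplitz (s : ℕ) (x : σ → R) : (esymmToeplitz s x).det = 1 := by
  have hlower : (esymmToeplitz s x).IsLowerTriangular := fun i m (him : i < m) => by
    simp [esymmToeplitz, not_le_of_gt him]
  rw [det_of_isLowerTriangular _ hlower]
  simp [esymmToeplitz]

theorem esymmJacobian_eq_esymmToeplitz_mul (s : ℕ) (x : σ → R) :
    esymmJacobian s x = esymmToeplitz s x * (rectVandermonde (-x) 1 s)ᵀ := by
  classical
  ext i j
  have hsum : ∑ m ∈ (range s).filter (· ≤ (i : ℕ)),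
      (-x j) ^ m * (univ.val.map x).esymm (i - m) = ((univ.erase j).val.map x).esymm i := by
    rw [univ.map_val_eq_cons_map_erase (mem_univ j),
      ← Multiset.sum_range_neg_pow_mul_esymm_cons]
    congr 1
    ext m
    simp only [mem_filter, mem_range]
    omega
  rw [esymmJacobian, of_apply, eval_pderiv_esymm_succ, ← hsum, Finset.sum_filter, mul_apply,
    ← Fin.sum_univ_eq_sum_range (fun m ↦ if m ≤ (i : ℕ) then
      (-x j) ^ m * (univ.val.map x).esymm (i - m) else 0)]
  refine Finset.sum_congr rfl fun m _ => ?_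
  simp only [esymmToeplitz, rectVandermonde_apply, transpose_apply, of_apply, Pi.one_apply,
    one_pow, mul_one, Fin.le_def, Pi.neg_apply]
  split_ifs <;> ring

theorem det_esymmJacobian_submatrix {s : ℕ} (x : σ → R) (c : Fin s → σ) :
    ((esymmJacobian s x).submatrix id c).det = (vandermonde (-(x ∘ c))).det := by
  have hminor : (esymmJacobian s x).submatrix id c =
      esymmToeplitz s x * (vandermonde (-(x ∘ c)))ᵀ := by
    rw [esymmJacobian_eq_esymmToeplitz_mul]
    ext i l
    simp [mul_apply, rectVandermonde_apply]
  rw [hminor, det_mul, det_transpose, det_esymmToeplitz, one_mul]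

theorem exists_det_esymmJacobian_submatrix_ne_zero {K : Type*} [Field K] [DecidableEq K]
    {s : ℕ} (x : σ → K) (h : s ≤ #(univ.image x)) :
    ∃ c : Fin s → σ, Function.Injective c ∧
      ((esymmJacobian s x).submatrix id c).det ≠ 0 := by
  obtain ⟨c, hc⟩ := Function.exists_injective_comp_of_le_card_image x h
  refine ⟨c, hc.of_comp, ?_⟩
  rw [det_esymmJacobian_submatrix, det_vandermonde_ne_zero_iff]
  exact neg_injective.comp hc

end Matrix

theorem jacobian_esymm_minors_and_distinct_coordinates_general (K : Type*) [Field K]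
    [DecidableEq K] (r s : ℕ) (x : Fin r → K)
    (M : Matrix (Fin s) (Fin r) K)
    (hM : M = Matrix.of fun (i : Fin s) (j : Fin r) => MvPolynomial.eval x (pderiv j (esymm (Fin r) K ((i : ℕ) + 1)))) :
    ((∀ c : Fin s → Fin r, Function.Injective c → (M.submatrix id c).det = 0) →
        (Finset.univ.image x).card ≤ s - 1) ∧
      (s ≤ (Finset.univ.image x).card → M.rank = s) := by
  replace hM : M = Matrix.esymmJacobian s x := hM
  subst hM
  refine ⟨fun hminors => ?_, fun h => ?_⟩
  · by_contra hcard
    obtain ⟨c, hc, hdet⟩ :=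
      Matrix.exists_det_esymmJacobian_submatrix_ne_zero (s := s) x (by omega)
    exact hdet (hminors c hc)
  · obtain ⟨c, -, hdet⟩ := Matrix.exists_det_esymmJacobian_submatrix_ne_zero x h
    refine le_antisymm (by simpa using (Matrix.esymmJacobian s x).rank_le_card_height) ?_
    simpa [Matrix.rank_of_det_ne_zero hdet] using
      (Matrix.esymmJacobian s x).rank_submatrix_le id c

/-- if every s×s minor of the Jacobian of Π₁,…,Π_s at x vanishes,
then x has at most s−1 pairwise-distinct coordinates; equivalently, if x has at
least s pairwise-distinct coordinates then the matrix has full rank s. -/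
theorem jacobian_esymm_minors_and_distinct_coordinates (K : Type*) [Field K]
    [DecidableEq K] (r s : ℕ) (hs : 1 ≤ s) (hsr : s ≤ r) (x : Fin r → K)
    (M : Matrix (Fin s) (Fin r) K)
    (hM : M = Matrix.of fun (i : Fin s) (j : Fin r) => MvPolynomial.eval x (pderiv j (esymm (Fin r) K ((i : ℕ) + 1)))) :
    ((∀ c : Fin s → Fin r, Function.Injective c → (M.submatrix id c).det = 0) →
        (Finset.univ.image x).card ≤ s - 1) ∧
      (s ≤ (Finset.univ.image x).card → M.rank = s) :=
  jacobian_esymm_minors_and_distinct_coordinates_general K r s x M hM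
end
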